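/- In any weak concurrent Kleene algebra, for all elements s and t, (s∥t)* ≤ s*∥t*. -/
import Mathlib

/-- Operations of a weak concurrent Kleene algebra. -/
class WCKAOps (K : Type*) where
  add : K → K → K
  seq : K → K → K
  par : K → K → K
  star : K → K
  zero : K
  one : K

namespace WCKAOps

variable {K : Type*} [WCKAOps K]

/-- The natural order: `x ≤ y` iff `x + y = y`. -/
def kle (x y : K) : Prop := add x y = y

end WCKAOps

open WCKAOps

/-- Axioms of a weak concurrent Kleene algebra. -/
class WCKA (K : Type*) [WCKAOps K] : Prop where
  add_assoc : ∀ x y z : K, add (add x y) z = add x (add y z)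
  add_comm : ∀ x y : K, add x y = add y x
  add_idem : ∀ x : K, add x x = x
  add_zero : ∀ x : K, add x zero = x
  seq_assoc : ∀ x y z : K, seq (seq x y) z = seq x (seq y z)
  one_seq : ∀ x : K, seq one x = x
  seq_one : ∀ x : K, seq x one = x
  zero_seq : ∀ x : K, seq zero x = zero
  add_seq : ∀ x y z : K, seq (add x y) z = add (seq x z) (seq y z)
  seq_subdistrib : ∀ x y z : K, kle (add (seq x y) (seq x z)) (seq x (add y z))
  star_unfold : ∀ x : K, add one (seq x (star x)) = star x
  star_induction : ∀ x y : K, kle (seq x y) y → kle (seq (star x) y) y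
  par_assoc : ∀ x y z : K, par (par x y) z = par x (par y z)
  par_comm : ∀ x y : K, par x y = par y x
  par_one_one : par (one : K) one = one
  par_subdistrib : ∀ x y z : K, kle (add (par x y) (par x z)) (par x (add y z))
  interchange : ∀ x y u v : K, kle (seq (par x y) (par u v)) (par (seq x u) (seq y v))

section Aux
variable {K : Type*} [WCKAOps K] [WCKA K]

lemma kle_trans {x y z : K} (h1 : kle x y) (h2 : kle y z) : kle x z := by
  unfold kle at *
  rw [← h2, ← WCKA.add_assoc, h1]

lemma kle_add_left (x y : K) : kle x (add x y) := by
  unfold kle; rw [← WCKA.add_assoc, WCKA.add_idem]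

lemma seq_mono_right {x y z : K} (h : kle y z) : kle (seq x y) (seq x z) := by
  have h1 : kle (seq x y) (add (seq x y) (seq x z)) := kle_add_left _ _
  have h2 := WCKA.seq_subdistrib x y z
  rw [h] at h2
  exact kle_trans h1 h2

lemma par_mono_right {x y z : K} (h : kle y z) : kle (par x y) (par x z) := by
  have h1 : kle (par x y) (add (par x y) (par x z)) := kle_add_left _ _
  have h2 := WCKA.par_subdistrib x y z
  rw [h] at h2
  exact kle_trans h1 h2

lemma par_mono {x y u v : K} (h1 : kle x u) (h2 : kle y v) :
    kle (par x y) (par u v) := by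
  have a : kle (par x y) (par x v) := par_mono_right h2
  have b : kle (par x v) (par u v) := by
    rw [WCKA.par_comm x v, WCKA.par_comm u v]
    exact par_mono_right h1
  exact kle_trans a b

lemma one_kle_star (x : K) : kle (one : K) (star x) := by
  unfold kle
  nth_rewrite 1 [← WCKA.star_unfold x]
  rw [← WCKA.add_assoc, WCKA.add_idem, WCKA.star_unfold]

lemma seq_star_kle (x : K) : kle (seq x (star x)) (star x) := by
  unfold kle
  nth_rewrite 2 [← WCKA.star_unfold x]
  rw [WCKA.add_comm (one : K), ← WCKA.add_assoc, WCKA.add_idem, WCKA.add_comm, WCKA.star_unfold]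

end Aux

/-- In any weak concurrent Kleene algebra, `(s∥t)* ≤ s*∥t*`. -/
theorem wcka_star_par_le {K : Type*} [WCKAOps K] [WCKA K] (s t : K) :
    kle (star (par s t)) (par (star s) (star t)) := by
  have hone : kle (one : K) (par (star s) (star t)) := by
    have h : kle (par (one : K) one) (par (star s) (star t)) :=
      par_mono (one_kle_star s) (one_kle_star t)
    rw [WCKA.par_one_one] at h
    exact h
  have hstep : kle (seq (par s t) (par (star s) (star t))) (par (star s) (star t)) := by
    have h1 := WCKA.interchange s t (star s) (star t)
    have h2 : kle (par (seq s (star s)) (seq t (star t))) (par (star s) (star t)) :=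
      par_mono (seq_star_kle s) (seq_star_kle t)
    exact kle_trans h1 h2
  have hind := WCKA.star_induction _ _ hstep
  have h3 : kle (star (par s t)) (seq (star (par s t)) (par (star s) (star t))) := by
    have h := seq_mono_right (x := star (par s t)) hone
    rwa [WCKA.seq_one] at h
  exact kle_trans h3 hind
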